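/- Inverse of the SO(3)-tangent map: let ψ ∈ ℝ³ with 0 < ‖ψ‖ < 2π, and define T(ψ) := 1 + ((cos‖ψ‖ − 1)/‖ψ‖²)·ψ̃ + ((1 − sin‖ψ‖/‖ψ‖)/‖ψ‖²)·ψ̃² and S(ψ) := 1 + (1/2)·ψ̃ + (1 − (‖ψ‖/2)·cot(‖ψ‖/2))·ψ̃²/‖ψ‖². Then T(ψ)·S(ψ) = 1 and S(ψ)·T(ψ) = 1, i.e., S(ψ) = T(ψ)⁻¹. -/

import Mathlib

open Matrix

/-- Euclidean norm on `ℝ³`. -/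
noncomputable def norm3 (ψ : Fin 3 → ℝ) : ℝ := Real.sqrt (ψ 0 ^ 2 + ψ 1 ^ 2 + ψ 2 ^ 2)

/-- The unique skew-symmetric matrix `ψ̃` with `ψ̃ v = ψ × v` for all `v`. -/
def tilde (ψ : Fin 3 → ℝ) : Matrix (Fin 3) (Fin 3) ℝ :=
  !![0, -ψ 2, ψ 1; ψ 2, 0, -ψ 0; -ψ 1, ψ 0, 0]

/-- The `SO(3)`-tangent map
`T(ψ) = 1 + ((cos‖ψ‖ − 1)/‖ψ‖²)·ψ̃ + ((1 − sin‖ψ‖/‖ψ‖)/‖ψ‖²)·ψ̃²`. -/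
noncomputable def Tso3 (ψ : Fin 3 → ℝ) : Matrix (Fin 3) (Fin 3) ℝ :=
  1 + ((Real.cos (norm3 ψ) - 1) / norm3 ψ ^ 2) • tilde ψ +
    ((1 - Real.sin (norm3 ψ) / norm3 ψ) / norm3 ψ ^ 2) • (tilde ψ ^ 2)

/-- `S(ψ) = 1 + (1/2)·ψ̃ + (1 − (‖ψ‖/2)·cot(‖ψ‖/2))·ψ̃²/‖ψ‖²`. -/
noncomputable def Sso3 (ψ : Fin 3 → ℝ) : Matrix (Fin 3) (Fin 3) ℝ :=
  1 + (1 / 2 : ℝ) • tilde ψ +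
    ((1 - (norm3 ψ / 2) * Real.cot (norm3 ψ / 2)) / norm3 ψ ^ 2) • (tilde ψ ^ 2)

/-- `ψ̃³ = −‖ψ‖²·ψ̃` (as a polynomial identity in the entries). -/
lemma tilde_cube (ψ : Fin 3 → ℝ) :
    tilde ψ ^ 3 = (-(ψ 0 ^ 2 + ψ 1 ^ 2 + ψ 2 ^ 2)) • tilde ψ := by
  ext i j
  fin_cases i <;> fin_cases j <;>
    simp [tilde, pow_succ, Matrix.mul_apply, Fin.sum_univ_three] <;> ring

/-- Product of two quadratic polynomials in a matrix `t` with `t³ = −n²·t`. -/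
lemma poly_mul_one {t : Matrix (Fin 3) (Fin 3) ℝ} {n a b c d : ℝ}
    (hc : t ^ 3 = (-(n ^ 2)) • t)
    (k1 : a + c - n ^ 2 * (a * d + b * c) = 0)
    (k2 : b + d + a * c - n ^ 2 * (b * d) = 0) :
    (1 + a • t + b • t ^ 2) * (1 + c • t + d • t ^ 2) = 1 := by
  have h4 : t ^ 2 * t ^ 2 = (-(n ^ 2)) • t ^ 2 := by
    have h : t ^ 2 * t ^ 2 = t ^ 3 * t := by rw [← pow_add, ← pow_succ]
    rw [h, hc, smul_mul_assoc, ← pow_two]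
  have expand : (1 + a • t + b • t ^ 2) * (1 + c • t + d • t ^ 2)
      = 1 + (a + c) • t + (b + d + a * c) • t ^ 2 + (a * d + b * c) • t ^ 3
        + (b * d) • (t ^ 2 * t ^ 2) := by
    simp only [add_mul, mul_add, one_mul, mul_one, smul_mul_assoc, mul_smul_comm, smul_smul,
      ← pow_two, ← pow_succ, ← pow_succ']
    module
  rw [expand, hc, h4]
  match_scalars <;> nlinarith [k1, k2]

theorem Tso3_inverse (ψ : Fin 3 → ℝ) (h0 : 0 < norm3 ψ) (h2π : norm3 ψ < 2 * Real.pi) :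
    Tso3 ψ * Sso3 ψ = 1 ∧ Sso3 ψ * Tso3 ψ = 1 := by
  set n := norm3 ψ with hn_def
  have hn : n ≠ 0 := ne_of_gt h0
  have hn2 : n ^ 2 = ψ 0 ^ 2 + ψ 1 ^ 2 + ψ 2 ^ 2 := Real.sq_sqrt (by positivity)
  have hcube : tilde ψ ^ 3 = (-(n ^ 2)) • tilde ψ := by rw [hn2]; exact tilde_cube ψ
  have hs : Real.sin (n / 2) ≠ 0 :=
    ne_of_gt (Real.sin_pos_of_pos_of_lt_pi (by linarith) (by linarith))
  have hcot : Real.cot (n / 2) = Real.cos (n / 2) / Real.sin (n / 2) := Real.cot_eq_cos_div_sin _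
  have hpy : Real.sin (n / 2) ^ 2 + Real.cos (n / 2) ^ 2 = 1 := Real.sin_sq_add_cos_sq _
  have hcos : Real.cos n = 1 - 2 * Real.sin (n / 2) ^ 2 := by
    have h := Real.cos_two_mul (n / 2)
    rw [show 2 * (n / 2) = n by ring] at h
    linarith
  have hsin : Real.sin n = 2 * Real.sin (n / 2) * Real.cos (n / 2) := by
    have h := Real.sin_two_mul (n / 2)
    rw [show 2 * (n / 2) = n by ring] at h
    exact h
  have k1 : ((Real.cos n - 1) / n ^ 2) + 1 / 2 -
      n ^ 2 * (((Real.cos n - 1) / n ^ 2) * ((1 - (n / 2) * Real.cot (n / 2)) / n ^ 2) +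
        ((1 - Real.sin n / n) / n ^ 2) * (1 / 2)) = 0 := by
    rw [hcot, hcos, hsin]; field_simp; ring
  have k2 : ((1 - Real.sin n / n) / n ^ 2) + ((1 - (n / 2) * Real.cot (n / 2)) / n ^ 2) +
      ((Real.cos n - 1) / n ^ 2) * (1 / 2) -
      n ^ 2 * (((1 - Real.sin n / n) / n ^ 2) * ((1 - (n / 2) * Real.cot (n / 2)) / n ^ 2)) = 0 := by
    rw [hcot, hcos, hsin]; field_simp
    linear_combination (-2 * Real.sin (n / 2) * n) * hpy
  have hTS : Tso3 ψ * Sso3 ψ = 1 := by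
    rw [Tso3, Sso3, ← hn_def]
    exact poly_mul_one hcube k1 k2
  exact ⟨hTS, mul_eq_one_comm.mp hTS⟩
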